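/- arXiv:0709.4275 — 5 statements merged into one kernel-verified Lean document; each statement's English description precedes it below -/
import Mathlib

section
/- Let n ≥ 2 and let P(z) = a_1 z + a_2 z² + ⋯ + a_n z^n be a complex polynomial with a_n ≠ 0. If P′(z) ≠ 0 for every z ∈ ℂ with |z| ≤ 1 (i.e. P is locally univalent in the closed unit disk), then Res(P′, P′^*) ≠ 0, where P′^* is the mirror conjugate of P′ with respect to n−1; in particular, the Jacobian of the complex moment map does not vanish at P. -/
open Polynomial ComplexConjugate

/-- Mirror conjugate of a polynomial `Q` with respect to `m ≥ deg Q`. -/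
noncomputable def mirrorConj (m : ℕ) (Q : Polynomial ℂ) : Polynomial ℂ :=
  (Q.map (starRingEnd ℂ)).reflect m

/-- The Sylvester matrix of `A` (regarded as having degree `m`) and `B` (regarded as
having degree `k`): the first `k` rows contain the shifted coefficients of `A`, the
last `m` rows the shifted coefficients of `B`. -/
noncomputable def sylvester {R : Type*} [CommRing R] (m k : ℕ) (A B : Polynomial R) :
    Matrix (Fin (k + m)) (Fin (k + m)) R :=
  Matrix.of fun i j =>
    if (i : ℕ) < k then
      (if (i : ℕ) ≤ (j : ℕ) ∧ (j : ℕ) ≤ (i : ℕ) + m then A.coeff ((i : ℕ) + m - (j : ℕ)) else 0)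
    else
      (if (i : ℕ) - k ≤ (j : ℕ) ∧ (j : ℕ) ≤ (i : ℕ) then B.coeff ((i : ℕ) - (j : ℕ))
       else 0)

/-- The resultant of `A` and `B` (of respective degrees `m` and `k`), as the determinant
of their Sylvester matrix. -/
noncomputable def resultant {R : Type*} [CommRing R] (m k : ℕ) (A B : Polynomial R) : R :=
  (sylvester m k A B).det


/-!
The zeros of `P'` lie outside the closed unit disk, and `z ↦ 1 / conj z` carries them onto the
zeros of the mirror conjugate `P'^*`, which therefore lie in the open unit disk. Hence `P'` and
`P'^*` have no common zero, so they are coprime, and the resultant of coprime polynomials does not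
vanish once the degree of the first one is exact.
-/

open scoped Matrix

theorem sylvester_eq_transpose_submatrix_sylvester {R : Type*} [CommRing R] (m k : ℕ)
    (A B : R[X]) :
    sylvester m k A B =
      ((A.sylvester B m k).submatrix (Fin.revPerm.trans (finCongr (add_comm k m)))
        (Fin.revPerm.trans (finCongr (add_comm k m))))ᵀ := by
  ext i j
  simp only [_root_.sylvester, Polynomial.sylvester, Fin.addCases, Matrix.transpose_apply,
    Matrix.submatrix_apply, Matrix.of_apply, Equiv.trans_apply, Fin.revPerm_apply, finCongr_apply,
    Set.mem_Icc]
  split_ifs <;> grind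

theorem resultant_eq_polynomial_resultant {R : Type*} [CommRing R] (m k : ℕ) (A B : R[X]) :
    resultant m k A B = A.resultant B m k := by
  rw [_root_.resultant, sylvester_eq_transpose_submatrix_sylvester, Matrix.det_transpose,
    Matrix.det_submatrix_equiv_self, Polynomial.resultant]

theorem Polynomial.resultant_ne_zero_of_degree_eq {R : Type*} [CommRing R] [IsDomain R]
    {A B : R[X]} {m k : ℕ} (hA : A.degree = m) (hB : B.natDegree ≤ k) (hAB : IsCoprime A B) :
    A.resultant B m k ≠ 0 := by
  obtain ⟨d, rfl⟩ := Nat.exists_eq_add_of_le hB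
  have hAm : A.natDegree = m := natDegree_eq_of_degree_eq_some hA
  have hA0 : A ≠ 0 := fun h => by simp [h] at hA
  rw [resultant_add_right_deg _ _ _ _ _ le_rfl, ← hAm]
  exact mul_ne_zero (pow_ne_zero _ (leadingCoeff_ne_zero.mpr hA0)) (resultant_ne_zero A B hAB)

theorem natDegree_mirrorConj_le {m : ℕ} {Q : ℂ[X]} (hQ : Q.natDegree ≤ m) :
    (mirrorConj m Q).natDegree ≤ m :=
  natDegree_reflect_le.trans (max_le le_rfl (natDegree_map_le.trans hQ))

theorem eval_mirrorConj {m : ℕ} {Q : ℂ[X]} (hQ : Q.natDegree ≤ m) {z : ℂ} (hz : z ≠ 0) :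
    (mirrorConj m Q).eval z = z ^ m * conj (Q.eval (conj z)⁻¹) := by
  have : Invertible z⁻¹ := invertibleOfNonzero (inv_ne_zero hz)
  have key := eval₂_reflect_mul_pow (RingHom.id ℂ) z⁻¹ m (Q.map (starRingEnd ℂ))
    (natDegree_map_le.trans hQ)
  rw [invOf_eq_inv, inv_inv, ← eval, ← eval, eval_map] at key
  rw [← eval₂_hom, map_inv₀, Complex.conj_conj, mirrorConj, ← key, mul_left_comm,
    ← mul_pow, mul_inv_cancel₀ hz, one_pow, mul_one]

theorem norm_lt_one_of_isRoot_mirrorConj {m : ℕ} {Q : ℂ[X]} (hQ : Q.natDegree ≤ m)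
    (hQ_disk : ∀ z : ℂ, ‖z‖ ≤ 1 → Q.eval z ≠ 0) {z : ℂ} (hz : (mirrorConj m Q).IsRoot z) :
    ‖z‖ < 1 := by
  rcases eq_or_ne z 0 with rfl | hz0
  · simp
  by_contra! h
  refine hQ_disk (conj z)⁻¹ ?_ ?_
  · simpa using inv_le_one_of_one_le₀ h
  · rw [IsRoot, eval_mirrorConj hQ hz0] at hz
    simpa [hz0] using hz

theorem isCoprime_mirrorConj {m : ℕ} {Q : ℂ[X]} (hQ : Q.natDegree ≤ m)
    (hQ_disk : ∀ z : ℂ, ‖z‖ ≤ 1 → Q.eval z ≠ 0) : IsCoprime Q (mirrorConj m Q) := by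
  refine (isCoprime_iff_aeval_ne_zero_of_isAlgClosed ℂ ℂ _ _).mpr fun z => ?_
  simp only [coe_aeval_eq_eval]
  by_cases hz : ‖z‖ ≤ 1
  · exact .inl (hQ_disk z hz)
  · exact .inr fun h => hz (norm_lt_one_of_isRoot_mirrorConj hQ hQ_disk h).le

theorem natDegree_sum_Icc_C_mul_X_pow {R : Type*} [Semiring R] {n : ℕ} (hn : 1 ≤ n)
    {a : ℕ → R} (hna : a n ≠ 0) :
    (∑ s ∈ Finset.Icc 1 n, C (a s) * X ^ s).natDegree = n := by
  refine natDegree_eq_of_le_of_coeff_ne_zero ?_ ?_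
  · exact natDegree_sum_le_of_forall_le _ _ fun s hs =>
      natDegree_C_mul_X_pow_le _ _ |>.trans (Finset.mem_Icc.mp hs).2
  · simpa [finsetSum_coeff, coeff_C_mul_X_pow, hn] using hna

/-- if `P(z) = a₁z + ⋯ + aₙzⁿ` (`n ≥ 2`, `aₙ ≠ 0`) satisfies `P'(z) ≠ 0`
for every `z` in the closed unit disk (local univalence), then `Res(P', P'^*) ≠ 0`;
in particular the Jacobian of the complex moment map does not vanish at `P`. -/
theorem resultant_ne_zero_of_locally_univalent (n : ℕ) (hn : 2 ≤ n) (a : ℕ → ℂ)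
    (hna : a n ≠ 0)
    (P : Polynomial ℂ)
    (hP : P = ∑ s ∈ Finset.Icc 1 n, Polynomial.C (a s) * Polynomial.X ^ s)
    (hloc : ∀ z : ℂ, ‖z‖ ≤ 1 → P.derivative.eval z ≠ 0) :
    resultant (n - 1) (n - 1) P.derivative (mirrorConj (n - 1) P.derivative) ≠ 0 := by
  have hPdeg : P.natDegree = n := hP ▸ natDegree_sum_Icc_C_mul_X_pow (by omega) hna
  have hP'deg : P.derivative.degree = ↑(n - 1) := by
    rw [degree_derivative (by omega), hPdeg]
  have hP'le : P.derivative.natDegree ≤ n - 1 := natDegree_le_of_degree_le hP'deg.le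
  rw [resultant_eq_polynomial_resultant]
  exact resultant_ne_zero_of_degree_eq hP'deg (natDegree_mirrorConj_le hP'le)
    (isCoprime_mirrorConj hP'le hloc)
end

section
/- (Richardson's formula) For every integer k ≥ 0, μ_k(P) = Σ s_1 · a_{s_1} a_{s_2} ⋯ a_{s_{k+1}} · conj(a_{s_1+s_2+⋯+s_{k+1}}), where the sum is taken over all (k+1)-tuples (s_1, …, s_{k+1}) of indices in {1, …, n}, with the convention a_j := 0 for j > n. -/
open Polynomial ComplexConjugate

/-- The `k`-th complex moment of `P`. -/
noncomputable def moment (n : ℕ) (P : Polynomial ℂ) (k : ℕ) : ℂ :=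
  (P.derivative * P ^ k * mirrorConj n P).coeff (n - 1)

namespace Polynomial

theorem natDegree_sum_C_mul_X_pow_le {R : Type*} [Semiring R] {S : Finset ℕ} {n : ℕ}
    (hS : ∀ s ∈ S, s ≤ n) (a : ℕ → R) :
    (∑ s ∈ S, C (a s) * X ^ s).natDegree ≤ n :=
  natDegree_sum_le_of_forall_le _ _ fun s hs => (natDegree_C_mul_X_pow_le _ _).trans (hS s hs)

variable {R : Type*} [CommSemiring R]

theorem prod_sum_C_mul_X_pow {ι : Type*} [Fintype ι] [DecidableEq ι] (S : ι → Finset ℕ)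
    (c : ι → ℕ → R) :
    ∏ i, ∑ s ∈ S i, C (c i s) * X ^ s =
      ∑ s ∈ Fintype.piFinset S, C (∏ i, c i (s i)) * X ^ (∑ i, s i) := by
  rw [Finset.prod_univ_sum]
  refine Finset.sum_congr rfl fun s _ => ?_
  rw [Finset.prod_mul_distrib, ← map_prod, Finset.prod_pow_eq_pow_sum]

theorem X_mul_derivative_C_mul_X_pow (c : R) (s : ℕ) :
    X * derivative (C c * X ^ s) = C (s * c) * X ^ s := by
  cases s with
  | zero => simp
  | succ m => rw [derivative_C_mul_X_pow, mul_comm c, Nat.add_sub_cancel, C_mul, pow_succ]; ring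

theorem X_mul_derivative_mul_pow_sum_C_mul_X_pow (S : Finset ℕ) (a : ℕ → R) (k : ℕ) :
    X * derivative (∑ s ∈ S, C (a s) * X ^ s) * (∑ s ∈ S, C (a s) * X ^ s) ^ k =
      ∑ s ∈ Fintype.piFinset (fun _ : Fin (k + 1) => S),
        C ((s 0 : R) * ∏ i, a (s i)) * X ^ (∑ i, s i) := by
  let c : Fin (k + 1) → ℕ → R := Fin.cons (fun s => s * a s) fun _ => a
  have hderiv : X * derivative (∑ s ∈ S, C (a s) * X ^ s) = ∑ s ∈ S, C (c 0 s) * X ^ s := by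
    simp only [derivative_sum, Finset.mul_sum, X_mul_derivative_C_mul_X_pow, c, Fin.cons_zero]
  have hprod : X * derivative (∑ s ∈ S, C (a s) * X ^ s) * (∑ s ∈ S, C (a s) * X ^ s) ^ k =
      ∏ i, ∑ s ∈ S, C (c i s) * X ^ s := by
    rw [Fin.prod_univ_succ, ← hderiv]
    simp [c]
  rw [hprod, prod_sum_C_mul_X_pow]
  refine Finset.sum_congr rfl fun s _ => ?_
  simp [Fin.prod_univ_succ, c, mul_assoc]

end Polynomial

theorem coeff_C_mul_X_pow_mul_mirrorConj {m : ℕ} {Q : ℂ[X]} (hQ : Q.natDegree ≤ m)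
    (c : ℂ) (e : ℕ) :
    (C c * X ^ e * mirrorConj m Q).coeff m = c * conj (Q.coeff e) := by
  rw [mul_assoc, coeff_C_mul, coeff_X_pow_mul']
  split_ifs with he
  · rw [mirrorConj, coeff_reflect, revAt_le (Nat.sub_le m e), Nat.sub_sub_self he, coeff_map]
  · rw [coeff_eq_zero_of_natDegree_lt (hQ.trans_lt (not_le.mp he)), map_zero, mul_zero]

theorem moment_eq_coeff_X_mul {n : ℕ} (hn : 1 ≤ n) (P : ℂ[X]) (k : ℕ) :
    moment n P k = (X * derivative P * P ^ k * mirrorConj n P).coeff n := by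
  obtain ⟨m, rfl⟩ := Nat.exists_eq_add_of_le' hn
  rw [moment, Nat.add_sub_cancel, mul_assoc X, mul_assoc X, coeff_X_mul]

/-- Richardson's formula: for every `k ≥ 0`,
`μ_k(P) = Σ s₁ ⬝ a_{s₁} ⋯ a_{s_{k+1}} ⬝ conj (a_{s₁+⋯+s_{k+1}})`,
the sum being over all `(k+1)`-tuples of indices in `{1, …, n}`,
with the convention `a_j = 0` for `j > n`. -/
theorem richardson_formula (n : ℕ) (hn : 1 ≤ n) (a : ℕ → ℂ)
    (ha : ∀ j, n < j → a j = 0)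
    (P : Polynomial ℂ) (hP : P = ∑ s ∈ Finset.Icc 1 n, Polynomial.C (a s) * Polynomial.X ^ s)
    (k : ℕ) :
    moment n P k =
      ∑ s ∈ Fintype.piFinset (fun _ : Fin (k + 1) => Finset.Icc 1 n),
        ((s 0 : ℕ) : ℂ) * (∏ i, a (s i)) * conj (a (∑ i, s i)) := by
  have hdeg : P.natDegree ≤ n :=
    hP ▸ natDegree_sum_C_mul_X_pow_le (fun s hs => (Finset.mem_Icc.mp hs).2) a
  have hcoeff : ∀ j, 1 ≤ j → P.coeff j = a j := by
    intro j hj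
    rw [hP, finsetSum_coeff]
    simp only [coeff_C_mul_X_pow, Finset.sum_ite_eq, Finset.mem_Icc]
    split_ifs with h
    · rfl
    · exact (ha j (by omega)).symm
  rw [moment_eq_coeff_X_mul hn, hP, X_mul_derivative_mul_pow_sum_C_mul_X_pow, ← hP,
    Finset.sum_mul, finsetSum_coeff]
  refine Finset.sum_congr rfl fun s hs => ?_
  have hs0 : 1 ≤ s 0 := (Finset.mem_Icc.mp (Fintype.mem_piFinset.mp hs 0)).1
  have hsum : 1 ≤ ∑ i, s i :=
    hs0.trans (Finset.single_le_sum (fun i _ => Nat.zero_le _) (Finset.mem_univ 0))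
  rw [coeff_C_mul_X_pow_mul_mirrorConj hdeg, hcoeff _ hsum]
end

section
/- For every integer k ≥ 0, (k+1)·μ_k(P) equals the coefficient of z^n in the polynomial P(z)^{k+1}·P′^*(z), where P′^* is the mirror conjugate of the derivative P′ with respect to n−1. -/
open Polynomial ComplexConjugate

/-!
Both sides are the pairing `∑ᵢ i qᵢ sᵢ` of the coefficients of `Q = P^{k+1}` with those of
`S = conj P`: the coefficient of `z^{n-1}` in `Q' · S^*` pairs `(Q')ᵢ = (i+1) q_{i+1}` with
`s_{i+1}`, and the coefficient of `z^n` in `Q · S'^*` pairs `q_{i+1}` with `(S')ᵢ = (i+1) s_{i+1}`;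
the shift by one in the second pairing is absorbed because `X ∣ Q`. The factor `k + 1` comes
from `(P^{k+1})' = (k+1) P^k P'`.
-/

namespace Polynomial

variable {R : Type*} [CommSemiring R]

theorem coeff_mul_reflect (A B : R[X]) (m : ℕ) :
    (A * B.reflect m).coeff m = ∑ i ∈ Finset.range (m + 1), A.coeff i * B.coeff i := by
  rw [coeff_mul, Finset.Nat.sum_antidiagonal_eq_sum_range_succ_mk]
  refine Finset.sum_congr rfl fun i hi => ?_
  rw [coeff_reflect, revAt_le (Nat.sub_le m i), Nat.sub_sub_self (Finset.mem_range_succ_iff.mp hi)]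

theorem coeff_mul_reflect_succ (A B : R[X]) (m : ℕ) :
    (A * B.reflect (m + 1)).coeff m = ∑ i ∈ Finset.range (m + 1), A.coeff i * B.coeff (i + 1) := by
  rw [coeff_mul, Finset.Nat.sum_antidiagonal_eq_sum_range_succ_mk]
  refine Finset.sum_congr rfl fun i hi => ?_
  have hi : i ≤ m := Finset.mem_range_succ_iff.mp hi
  rw [coeff_reflect, revAt_le (by omega), show m + 1 - (m - i) = i + 1 by omega]

theorem coeff_derivative_mul_reflect_succ {Q : R[X]} (hQ : X ∣ Q) (S : R[X]) (m : ℕ) :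
    (Q.derivative * S.reflect (m + 1)).coeff m = (Q * S.derivative.reflect m).coeff (m + 1) := by
  obtain ⟨Q, rfl⟩ := hQ
  rw [mul_assoc, coeff_X_mul, coeff_mul_reflect, coeff_mul_reflect_succ]
  refine Finset.sum_congr rfl fun i _ => ?_
  rw [coeff_derivative, coeff_derivative, coeff_X_mul]
  ring

end Polynomial

theorem succ_mul_moment (n : ℕ) (P : ℂ[X]) (k : ℕ) :
    ((k : ℂ) + 1) * moment n P k = ((P ^ (k + 1)).derivative * mirrorConj n P).coeff (n - 1) := by
  rw [moment, derivative_pow, Nat.add_sub_cancel, ← coeff_C_mul]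
  congr 1
  push_cast
  ring

theorem mirrorConj_derivative (m : ℕ) (P : ℂ[X]) :
    mirrorConj m P.derivative = (P.map (starRingEnd ℂ)).derivative.reflect m := by
  rw [mirrorConj, derivative_map]

theorem X_dvd_sum_Icc_one (n : ℕ) (a : ℕ → ℂ) :
    X ∣ ∑ s ∈ Finset.Icc 1 n, C (a s) * X ^ s :=
  Finset.dvd_sum fun _ hs =>
    (dvd_pow_self X (Nat.one_le_iff_ne_zero.mp (Finset.mem_Icc.mp hs).1)).mul_left _

/-- for every `k ≥ 0`, `(k+1)·μ_k(P)` equals the coefficient of `z^n`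
in `P^{k+1} ⬝ P'^*`, where `P'^*` is the mirror conjugate of `P'` w.r.t. `n-1`. -/
theorem moment_eq_coeff_pow_succ (n : ℕ) (hn : 1 ≤ n) (a : ℕ → ℂ)
    (P : Polynomial ℂ) (hP : P = ∑ s ∈ Finset.Icc 1 n, Polynomial.C (a s) * Polynomial.X ^ s)
    (k : ℕ) :
    ((k : ℂ) + 1) * moment n P k =
      (P ^ (k + 1) * mirrorConj (n - 1) P.derivative).coeff n := by
  have hX : X ∣ P ^ (k + 1) := (hP ▸ X_dvd_sum_Icc_one n a).pow k.succ_ne_zero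
  obtain ⟨m, rfl⟩ : ∃ m, n = m + 1 := ⟨n - 1, by omega⟩
  rw [succ_mul_moment, mirrorConj, mirrorConj_derivative, Nat.add_sub_cancel,
    coeff_derivative_mul_reflect_succ hX]
end

section
/- For every integer k ≥ 0 and every j with 1 ≤ j ≤ n, the partial derivative of the formal moment satisfies ∂M_k/∂a_j = the coefficient of z^{n−j} in Q^*(z)·P(z)^k, as an identity in the polynomial ring ℂ[a_1,…,a_n,b_1,…,b_n]. -/
open Polynomial MvPolynomial

/-- `P(z) = Σ_{s=1}^n a_s z^s` with formal coefficients `a_s = X (Sum.inl s)` in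
`ℂ[a₁,…,aₙ,b₁,…,bₙ]`. -/
noncomputable def Pform (n : ℕ) : Polynomial (MvPolynomial (ℕ ⊕ ℕ) ℂ) :=
  ∑ s ∈ Finset.Icc 1 n, Polynomial.C (MvPolynomial.X (Sum.inl s)) * Polynomial.X ^ s

/-- `P^*(z) = Σ_{j=0}^{n-1} b_{n-j} z^j`, the formal mirror conjugate of `P` w.r.t. `n`,
with `b_s = X (Sum.inr s)` playing the role of the conjugate of `a_s`. -/
noncomputable def PstarForm (n : ℕ) : Polynomial (MvPolynomial (ℕ ⊕ ℕ) ℂ) :=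
  ∑ s ∈ Finset.Icc 1 n, Polynomial.C (MvPolynomial.X (Sum.inr s)) * Polynomial.X ^ (n - s)

/-- `Q^*(z) = Σ_{j=0}^{n-1} (n-j) b_{n-j} z^j`, the formal mirror conjugate of `P'`
w.r.t. `n-1`. -/
noncomputable def QstarForm (n : ℕ) : Polynomial (MvPolynomial (ℕ ⊕ ℕ) ℂ) :=
  ∑ s ∈ Finset.Icc 1 n,
    Polynomial.C ((s : MvPolynomial (ℕ ⊕ ℕ) ℂ) * MvPolynomial.X (Sum.inr s)) *
      Polynomial.X ^ (n - s)

/-- The formal `k`-th moment `M_k ∈ ℂ[a₁,…,aₙ,b₁,…,bₙ]`: the coefficient of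
`z^{n-1}` in `P'(z)·P(z)^k·P^*(z)`. -/
noncomputable def Mform (n k : ℕ) : MvPolynomial (ℕ ⊕ ℕ) ℂ :=
  ((Pform n).derivative * Pform n ^ k * PstarForm n).coeff (n - 1)

/-!
Differentiating the coefficients of a polynomial in `z` with respect to `a_j` is a derivation `D`
that commutes with `d/dz`, with `D P = z^j` and `D P^* = 0`; hence `D (P' P^k) = (z^j P^k)'`,
and `∂M_k/∂a_j` is the `z^{n-1}`-coefficient of `(z^j P^k)' P^*`. Integrating by parts on
coefficients, `[z^{n-1}] (F' H) = n [z^n] (F H) - [z^{n-1}] (F H')`, and the identity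
`Q^* = n P^* - z P^*'` turns this into the `z^{n-j}`-coefficient of `Q^* P^k`.
-/

namespace Derivation

variable {R A : Type*} [CommRing R] [CommRing A] [Algebra R A] (d : Derivation R A A)

noncomputable def mapCoeffsSelf : Derivation R A[X] A[X] :=
  PolynomialModule.equivPolynomialSelf.compDer d.mapCoeffs

@[simp]
lemma coeff_mapCoeffsSelf (p : A[X]) (i : ℕ) :
    (d.mapCoeffsSelf p).coeff i = d (p.coeff i) := rfl

lemma mapCoeffsSelf_C_mul_X_pow (a : A) (s : ℕ) :
    d.mapCoeffsSelf (Polynomial.C a * Polynomial.X ^ s) =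
      Polynomial.C (d a) * Polynomial.X ^ s := by
  ext i
  rw [coeff_mapCoeffsSelf, coeff_C_mul_X_pow, coeff_C_mul_X_pow, apply_ite d, map_zero]

lemma mapCoeffsSelf_derivative (p : A[X]) :
    d.mapCoeffsSelf (derivative p) = derivative (d.mapCoeffsSelf p) := by
  ext i
  simp [coeff_derivative, leibniz, mul_comm]

lemma mapCoeffsSelf_derivative_mul_pow (p : A[X]) (k : ℕ) :
    d.mapCoeffsSelf (derivative p * p ^ k) = derivative (d.mapCoeffsSelf p * p ^ k) := by
  rw [leibniz, leibniz_pow, mapCoeffsSelf_derivative, derivative_mul, derivative_pow,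
    Polynomial.C_eq_natCast]
  simp only [smul_eq_mul, nsmul_eq_mul]
  ring

end Derivation

theorem Polynomial.coeff_derivative_mul_add_coeff_mul_derivative {R : Type*} [CommSemiring R]
    (f g : R[X]) (m : ℕ) :
    (derivative f * g).coeff m + (f * derivative g).coeff m =
      (f * g).coeff (m + 1) * ((m + 1 : ℕ) : R) := by
  rw [← coeff_add, ← derivative_mul, coeff_derivative, Nat.cast_succ]

theorem Polynomial.coeff_X_pow_mul_sub_one {R : Type*} [Semiring R] (p : R[X]) {j n : ℕ}
    (hj1 : 1 ≤ j) (hjn : j ≤ n) : (X ^ j * p).coeff (n - 1) = (X * p).coeff (n - j) := by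
  rw [← Nat.sub_add_cancel hj1, pow_succ, mul_assoc, coeff_X_pow_mul', if_pos (by omega)]
  congr 1
  omega

theorem Polynomial.X_mul_derivative_X_pow {R : Type*} [CommSemiring R] (m : ℕ) :
    (X : R[X]) * derivative (X ^ m) = (m : R[X]) * X ^ m := by
  cases m with
  | zero => simp
  | succ m => rw [derivative_X_pow, C_eq_natCast]; push_cast; ring

lemma mapCoeffsSelf_pderiv_inl_Pform {n j : ℕ} (hj1 : 1 ≤ j) (hjn : j ≤ n) :
    (pderiv (R := ℂ) (Sum.inl j)).mapCoeffsSelf (Pform n) = Polynomial.X ^ j := by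
  rw [Pform, map_sum, Finset.sum_eq_single_of_mem j (Finset.mem_Icc.2 ⟨hj1, hjn⟩)]
  · simp only [Derivation.mapCoeffsSelf_C_mul_X_pow, pderiv_X_self, map_one, one_mul]
  · intro s _ hs
    rw [Derivation.mapCoeffsSelf_C_mul_X_pow, pderiv_X_of_ne (Sum.inl_injective.ne hs),
      map_zero, zero_mul]

lemma mapCoeffsSelf_pderiv_inl_PstarForm (n j : ℕ) :
    (pderiv (R := ℂ) (Sum.inl j)).mapCoeffsSelf (PstarForm n) = 0 := by
  simp only [PstarForm, map_sum, Derivation.mapCoeffsSelf_C_mul_X_pow,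
    pderiv_X_of_ne Sum.inr_ne_inl, map_zero, zero_mul, Finset.sum_const_zero]

lemma QstarForm_add_X_mul_derivative_PstarForm (n : ℕ) :
    QstarForm n + Polynomial.X * derivative (PstarForm n) = n • PstarForm n := by
  rw [QstarForm, PstarForm, derivative_sum, Finset.mul_sum, ← Finset.sum_add_distrib,
    Finset.smul_sum]
  refine Finset.sum_congr rfl fun s hs => ?_
  rw [derivative_C_mul, mul_left_comm, Polynomial.X_mul_derivative_X_pow,
    Nat.cast_sub (Finset.mem_Icc.1 hs).2, Polynomial.C_mul, map_natCast, nsmul_eq_mul]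
  ring

lemma pderiv_inl_Mform {n j : ℕ} (k : ℕ) (hj1 : 1 ≤ j) (hjn : j ≤ n) :
    pderiv (Sum.inl j) (Mform n k) =
      (derivative (Polynomial.X ^ j * Pform n ^ k) * PstarForm n).coeff (n - 1) := by
  rw [Mform, ← Derivation.coeff_mapCoeffsSelf, Derivation.leibniz,
    mapCoeffsSelf_pderiv_inl_PstarForm, Derivation.mapCoeffsSelf_derivative_mul_pow,
    mapCoeffsSelf_pderiv_inl_Pform hj1 hjn, smul_zero, zero_add, smul_eq_mul, mul_comm]

theorem pderiv_a_Mform_general (n k j : ℕ) (hj1 : 1 ≤ j) (hjn : j ≤ n) :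
    MvPolynomial.pderiv (Sum.inl j) (Mform n k) =
      (QstarForm n * Pform n ^ k).coeff (n - j) := by
  set G := Pform n ^ k
  set Ps := PstarForm n
  have hparts := coeff_derivative_mul_add_coeff_mul_derivative (Polynomial.X ^ j * G) Ps (n - 1)
  rw [Nat.sub_add_cancel (hj1.trans hjn)] at hparts
  have hshift : (Polynomial.X ^ j * G * Ps).coeff n = (Ps * G).coeff (n - j) := by
    rw [mul_assoc, mul_comm G, coeff_X_pow_mul', if_pos hjn]
  have hshift' : (Polynomial.X ^ j * G * derivative Ps).coeff (n - 1) =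
      (Polynomial.X * (derivative Ps * G)).coeff (n - j) := by
    rw [mul_assoc, mul_comm G, coeff_X_pow_mul_sub_one _ hj1 hjn]
  have hQ := congrArg (fun q => (q * G).coeff (n - j))
    (QstarForm_add_X_mul_derivative_PstarForm n)
  simp only [add_mul, Polynomial.coeff_add, nsmul_eq_mul, mul_assoc, ← Polynomial.C_eq_natCast,
    Polynomial.coeff_C_mul] at hQ
  rw [pderiv_inl_Mform k hj1 hjn]
  linear_combination hparts - hQ + (n : MvPolynomial (ℕ ⊕ ℕ) ℂ) * hshift - hshift'

/-- for every `k ≥ 0` and `1 ≤ j ≤ n`,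
`∂M_k/∂a_j` equals the coefficient of `z^{n-j}` in `Q^*(z)·P(z)^k`. -/
theorem pderiv_a_Mform (n k j : ℕ) (hn : 1 ≤ n) (hj1 : 1 ≤ j) (hjn : j ≤ n) :
    MvPolynomial.pderiv (Sum.inl j) (Mform n k) =
      (QstarForm n * Pform n ^ k).coeff (n - j) :=
  pderiv_a_Mform_general n k j hj1 hjn
end

section
/- Let 𝔻 = {z ∈ ℂ : |z| < 1} be the open unit disk. For every integer k ≥ 0, (1/π)·∫_𝔻 P(z)^k·|P′(z)|² dA(z) = μ_k(P), where dA denotes Lebesgue area measure on ℂ. -/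
/-!
In polar coordinates `z = r e^{iθ}` the monomials are orthogonal on the unit disk:
`∫_𝔻 z^i conj(z)^j dA = π/(i+1)` if `i = j` and `0` otherwise. Writing
`P^k |P'|² = (P' P^k) · conj(P')`, the normalised integral is therefore
`∑ᵢ (P' P^k)ᵢ conj(P'ᵢ)/(i+1) = ∑ᵢ (P' P^k)ᵢ conj(a_{i+1})`, and this is the
coefficient of `z^{n-1}` in `P' P^k P^*`, because `P^*` carries `conj(a_{n-j})` at `z^j`.
-/

open Polynomial ComplexConjugate MeasureTheory

section

open Complex

lemma integral_exp_int_mul_I (m : ℤ) :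
    ∫ θ in -Real.pi..Real.pi, exp (m * I * θ) = if m = 0 then 2 * (Real.pi : ℂ) else 0 := by
  split_ifs with hm
  · simp [hm, two_mul]
  have hc : (m : ℂ) * I ≠ 0 := mul_ne_zero (by exact_mod_cast hm) I_ne_zero
  -- `exp (m I θ)` is `2π`-periodic, so its primitive takes equal values at `±π`.
  have hper : exp (m * I * Real.pi) = exp (m * I * (-Real.pi : ℝ)) := by
    rw [← mul_one (exp (m * I * (-Real.pi : ℝ))), ← exp_int_mul_two_pi_mul_I m, ← exp_add]
    congr 1
    push_cast
    ring
  rw [integral_exp_mul_complex hc, hper, sub_self, zero_div]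

lemma setIntegral_Ioi_indicator_Iio_one_pow (m : ℕ) :
    ∫ r in Set.Ioi (0 : ℝ), (Set.Iio 1).indicator (fun r : ℝ => (r : ℂ) ^ m) r =
      1 / (m + 1) := by
  rw [setIntegral_indicator measurableSet_Iio, Set.Ioi_inter_Iio, ← integral_Ioc_eq_integral_Ioo,
    ← intervalIntegral.integral_of_le zero_le_one]
  norm_cast
  rw [intervalIntegral.integral_ofReal, integral_pow]
  push_cast; ring

lemma polarCoord_symm_pow_mul_conj_pow (p : ℝ × ℝ) (i j : ℕ) :
    Complex.polarCoord.symm p ^ i * conj (Complex.polarCoord.symm p) ^ j =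
      (p.1 : ℂ) ^ (i + j) * exp (((i : ℤ) - j : ℤ) * I * p.2) := by
  have hsymm : Complex.polarCoord.symm p = p.1 * exp (p.2 * I) := by
    rw [Complex.polarCoord_symm_apply, exp_mul_I, ← ofReal_cos, ← ofReal_sin]
  have hconj : conj (Complex.polarCoord.symm p) = p.1 * exp (-(p.2 * I)) := by
    rw [hsymm, map_mul, conj_ofReal, ← exp_conj, map_mul, conj_ofReal, conj_I, mul_neg]
  rw [hconj, hsymm, mul_pow, mul_pow, ← exp_nat_mul, ← exp_nat_mul, pow_add,
    mul_mul_mul_comm, ← exp_add]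
  congr 2
  push_cast
  ring

lemma setIntegral_ball_pow_mul_conj_pow (i j : ℕ) :
    ∫ z in Metric.ball (0 : ℂ) 1, z ^ i * conj z ^ j =
      if i = j then (Real.pi : ℂ) / (i + 1) else 0 := by
  rw [← integral_indicator measurableSet_ball, ← Complex.integral_comp_polarCoord_symm]
  have hpolar : ∀ p ∈ polarCoord.target,
      p.1 • (Metric.ball (0 : ℂ) 1).indicator (fun z => z ^ i * conj z ^ j)
          (Complex.polarCoord.symm p) =
        (Set.Iio 1).indicator (fun r : ℝ => (r : ℂ) ^ (i + j + 1)) p.1 *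
          exp (((i : ℤ) - j : ℤ) * I * p.2) := by
    rintro p ⟨hr : 0 < p.1, -⟩
    have hmem : Complex.polarCoord.symm p ∈ Metric.ball 0 1 ↔ p.1 ∈ Set.Iio 1 := by
      rw [mem_ball_zero_iff, norm_polarCoord_symm, abs_of_pos hr, Set.mem_Iio]
    by_cases h : p.1 ∈ Set.Iio 1
    · rw [Set.indicator_of_mem (hmem.mpr h), Set.indicator_of_mem h,
        polarCoord_symm_pow_mul_conj_pow, real_smul, pow_succ]
      ring
    · rw [Set.indicator_of_notMem (mt hmem.mp h), Set.indicator_of_notMem h, smul_zero, zero_mul]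
  rw [setIntegral_congr_fun polarCoord.open_target.measurableSet hpolar, polarCoord_target,
    Measure.volume_eq_prod,
    setIntegral_prod_mul _ (fun θ : ℝ => exp (((i : ℤ) - j : ℤ) * I * θ)),
    setIntegral_Ioi_indicator_Iio_one_pow,
    ← integral_Ioc_eq_integral_Ioo,
    ← intervalIntegral.integral_of_le (by linarith [Real.pi_pos]), integral_exp_int_mul_I]
  have hij : ((i : ℤ) - j = 0) ↔ i = j := by omega
  simp only [hij]
  split_ifs with h
  · subst h
    have hi : (i : ℂ) + 1 ≠ 0 := Nat.cast_add_one_ne_zero i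
    have h2 : ((i + i + 1 : ℕ) : ℂ) + 1 = 2 * ((i : ℂ) + 1) := by push_cast; ring
    rw [h2]
    field_simp
  · rw [mul_zero]

lemma setIntegral_ball_eval_mul_conj_eval {Q R : ℂ[X]} {N : ℕ} (hQ : Q.natDegree < N)
    (hR : R.natDegree < N) :
    ∫ z in Metric.ball (0 : ℂ) 1, Q.eval z * conj (R.eval z) =
      Real.pi * ∑ i ∈ Finset.range N, Q.coeff i * conj (R.coeff i) / (i + 1) := by
  have hexpand : ∀ z : ℂ, Q.eval z * conj (R.eval z) = ∑ i ∈ Finset.range N,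
      ∑ j ∈ Finset.range N, Q.coeff i * conj (R.coeff j) * (z ^ i * conj z ^ j) := by
    intro z
    simp only [eval_eq_sum_range' hQ, eval_eq_sum_range' hR, map_sum, map_mul, map_pow,
      Finset.sum_mul_sum]
    exact Finset.sum_congr rfl fun i _ => Finset.sum_congr rfl fun j _ => by ring
  have hintegrable : ∀ i j, IntegrableOn (fun z : ℂ => z ^ i * conj z ^ j) (Metric.ball 0 1) :=
    fun i j => ((by fun_prop : Continuous fun z : ℂ => z ^ i * conj z ^ j).continuousOn
      |>.integrableOn_compact (isCompact_closedBall 0 1)).mono_set Metric.ball_subset_closedBall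
  simp_rw [hexpand]
  rw [integral_finsetSum _ fun i _ =>
      integrable_finsetSum _ fun j _ => (hintegrable i j).const_mul _,
    Finset.mul_sum]
  refine Finset.sum_congr rfl fun i hi => ?_
  rw [integral_finsetSum _ fun j _ => (hintegrable i j).const_mul _]
  simp only [integral_const_mul, setIntegral_ball_pow_mul_conj_pow, mul_ite, mul_zero,
    Finset.sum_ite_eq, if_pos hi]
  ring

lemma setIntegral_ball_eval_mul_conj_eval_derivative {Q R : ℂ[X]} {N : ℕ}
    (hQ : Q.natDegree < N) (hR : R.derivative.natDegree < N) :
    ∫ z in Metric.ball (0 : ℂ) 1, Q.eval z * conj (R.derivative.eval z) =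
      Real.pi * ∑ i ∈ Finset.range N, Q.coeff i * conj (R.coeff (i + 1)) := by
  rw [setIntegral_ball_eval_mul_conj_eval hQ hR]
  congr 1
  refine Finset.sum_congr rfl fun i _ => ?_
  have hi : (i : ℂ) + 1 ≠ 0 := Nat.cast_add_one_ne_zero i
  rw [coeff_derivative, map_mul, show conj ((i : ℂ) + 1) = i + 1 by simp]
  field_simp

end

lemma moment_eq_sum_coeff_mul_conj_coeff_succ {n : ℕ} (hn : 1 ≤ n) {P : ℂ[X]}
    (hP : P.natDegree ≤ n) (k : ℕ) {N : ℕ} (hN : n ≤ N) :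
    moment n P k =
      ∑ i ∈ Finset.range N, (P.derivative * P ^ k).coeff i * conj (P.coeff (i + 1)) := by
  rw [moment, mirrorConj, coeff_mul, Finset.Nat.sum_antidiagonal_eq_sum_range_succ_mk,
    show (n - 1).succ = n by omega]
  calc _ = ∑ i ∈ Finset.range n, (P.derivative * P ^ k).coeff i * conj (P.coeff (i + 1)) := by
        refine Finset.sum_congr rfl fun i hi => ?_
        have hi : i < n := Finset.mem_range.1 hi
        rw [coeff_reflect, revAt_le (by omega), coeff_map, show n - (n - 1 - i) = i + 1 by omega]
    _ = _ := by
        refine Finset.sum_subset (Finset.range_subset_range.2 hN) fun i _ hi => ?_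
        have hi : n ≤ i := by simpa using hi
        rw [coeff_eq_zero_of_natDegree_lt (p := P) (by omega), map_zero, mul_zero]

/-- for every `k ≥ 0`,
`(1/π) ∫_𝔻 P(z)^k |P'(z)|² dA(z) = μ_k(P)`, where `𝔻` is the open unit disk and
`dA` is Lebesgue area measure on `ℂ`. -/
theorem integral_eq_moment (n : ℕ) (hn : 1 ≤ n) (a : ℕ → ℂ)
    (P : Polynomial ℂ)
    (hP : P = ∑ s ∈ Finset.Icc 1 n, Polynomial.C (a s) * Polynomial.X ^ s)
    (k : ℕ) :
    (1 / (Real.pi : ℂ)) *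
        ∫ z in Metric.ball (0 : ℂ) 1,
          (P.eval z) ^ k * ((‖P.derivative.eval z‖ : ℝ) : ℂ) ^ 2 =
      moment n P k := by
  have hdeg : P.natDegree ≤ n := hP ▸ natDegree_sum_le_of_forall_le _ _ fun s hs =>
    (natDegree_C_mul_X_pow_le _ _).trans (Finset.mem_Icc.1 hs).2
  have hintegrand : ∀ z : ℂ, (P.eval z) ^ k * ((‖P.derivative.eval z‖ : ℝ) : ℂ) ^ 2 =
      (P.derivative * P ^ k).eval z * conj (P.derivative.eval z) := by
    intro z
    rw [← Complex.mul_conj', eval_mul, eval_pow]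
    ring
  set N := (P.derivative * P ^ k).natDegree + n + 1
  have hderiv : P.derivative.natDegree < N := by
    have := natDegree_derivative_le P
    omega
  have hnN : n ≤ N := by omega
  simp_rw [hintegrand]
  rw [setIntegral_ball_eval_mul_conj_eval_derivative (by omega) hderiv,
    moment_eq_sum_coeff_mul_conj_coeff_succ hn hdeg k hnN, one_div,
    inv_mul_cancel_left₀ (Complex.ofReal_ne_zero.2 Real.pi_ne_zero)]
end
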